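/- Let π be a finitely generated group, φ: π → π an endomorphism, and π' a φ-invariant subgroup of finite index in π. If the restriction φ' = φ|_{π'} is not an eventually trivial endomorphism, then GR(φ) = GR(φ'). -/

import Mathlib

/-!
The sequences `Lk S φ k` and `Lk S' φ' k` are submultiplicative, and positive because `φ'`
(hence `φ`) is not eventually trivial. For such a sequence `M`, every `β > inf_k M k ^ (1/k)`
dominates `M` geometrically, so the infimum cannot increase when `M` is replaced by any `L` with
`L k ≤ C * ∑_{j ≤ k} M j + C`. It remains to compare the two sequences in this sense.

Since `N` has finite index it is undistorted (Schreier's argument), so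
`Lk S' φ' k ≤ C * Lk S φ k + C`. Conversely, write every `g` as `r * h` with `r` one of the
finitely many coset representatives and `h ∈ N`. Applying `φ` to a representative gives another
representative times an element of `N`, so `φ^k s` is a representative times a product of
`φ'^j`-images, `j ≤ k`, of boundedly long elements of `N`; hence
`Lk S φ k ≤ C * ∑_{j ≤ k} Lk S' φ' j + C`.
-/

open Filter Topology

noncomputable def wordLength {G : Type*} [Group G] (S : Set G) (g : G) : ℕ :=
  sInf {n : ℕ | ∃ w : List G, w.length = n ∧ (∀ x ∈ w, x ∈ S ∨ x⁻¹ ∈ S) ∧ w.prod = g}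

noncomputable def Lk {G : Type*} [Group G] (S : Finset G) (f : G → G) (k : ℕ) : ℕ :=
  S.sup fun s => wordLength (S : Set G) (f^[k] s)

/-- Stated as an infimum, which by Fekete's lemma is the limit `lim_k Lk S f k ^ (1/k)`. -/
noncomputable def GR {G : Type*} [Group G] (S : Finset G) (f : G → G) : ℝ :=
  ⨅ k : ℕ+, (Lk S f k : ℝ) ^ (((k : ℕ) : ℝ))⁻¹

def EventuallyTrivial {G : Type*} [Group G] (f : G → G) : Prop :=
  ∃ N : ℕ, 0 < N ∧ ∀ g, f^[N] g = 1

section WordLength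

open Pointwise

variable {G : Type*} [Group G] {S : Set G}

theorem wordLength_list_prod_le {w : List G} (hw : ∀ x ∈ w, x ∈ S ∪ S⁻¹) :
    wordLength S w.prod ≤ w.length :=
  Nat.sInf_le ⟨w, rfl, hw, rfl⟩

theorem wordLength_one : wordLength S (1 : G) = 0 :=
  Nat.le_zero.1 (wordLength_list_prod_le (w := []) (by simp))

theorem wordLength_le_one {s : G} (hs : s ∈ S) : wordLength S s ≤ 1 := by
  simpa using wordLength_list_prod_le (w := [s]) (by simp [hs])

theorem exists_list_length_eq_wordLength (hS : Subgroup.closure S = ⊤) (g : G) :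
    ∃ w : List G, (∀ x ∈ w, x ∈ S ∪ S⁻¹) ∧ w.prod = g ∧ w.length = wordLength S g := by
  have hg : g ∈ Submonoid.closure (S ∪ S⁻¹) := by
    rw [← Subgroup.closure_toSubmonoid, hS]
    trivial
  obtain ⟨w, hw, rfl⟩ := Submonoid.exists_list_of_mem_closure hg
  obtain ⟨w', hlen, hw', hprod⟩ : wordLength S w.prod ∈ _ :=
    Nat.sInf_mem ⟨w.length, w, rfl, hw, rfl⟩
  exact ⟨w', hw', hprod, hlen⟩

theorem wordLength_mul_le (hS : Subgroup.closure S = ⊤) (g h : G) :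
    wordLength S (g * h) ≤ wordLength S g + wordLength S h := by
  obtain ⟨v, hv, rfl, hvl⟩ := exists_list_length_eq_wordLength hS g
  obtain ⟨w, hw, rfl, hwl⟩ := exists_list_length_eq_wordLength hS h
  rw [← hvl, ← hwl, ← List.length_append, ← List.prod_append]
  exact wordLength_list_prod_le fun x hx => (List.mem_append.1 hx).elim (hv x) (hw x)

theorem wordLength_inv_le (hS : Subgroup.closure S = ⊤) (g : G) :
    wordLength S g⁻¹ ≤ wordLength S g := by
  obtain ⟨w, hw, rfl, hwl⟩ := exists_list_length_eq_wordLength hS g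
  rw [← hwl, List.prod_inv_reverse, ← List.length_map (f := fun x : G => x⁻¹),
    ← List.length_reverse]
  refine wordLength_list_prod_le fun x hx => ?_
  obtain ⟨y, hy, rfl⟩ := List.mem_map.1 (List.mem_reverse.1 hx)
  simpa [or_comm] using hw y hy

theorem eq_one_of_wordLength_eq_zero (hS : Subgroup.closure S = ⊤) {g : G}
    (h : wordLength S g = 0) : g = 1 := by
  obtain ⟨w, -, rfl, hwl⟩ := exists_list_length_eq_wordLength hS g
  rw [h, List.length_eq_zero_iff] at hwl
  rw [hwl, List.prod_nil]

theorem le_mul_wordLength_add (hS : Subgroup.closure S = ⊤) {c : G → ℕ} {K : ℕ}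
    (hc : ∀ s ∈ S, ∀ g, c (s * g) ≤ K + c g ∧ c (s⁻¹ * g) ≤ K + c g) (g : G) :
    c g ≤ K * wordLength S g + c 1 := by
  obtain ⟨w, hw, rfl, hwl⟩ := exists_list_length_eq_wordLength hS g
  rw [← hwl]
  clear hwl
  induction w with
  | nil => simp
  | cons s w ih =>
    have hstep : c (s * w.prod) ≤ K + c w.prod := by
      rcases hw s List.mem_cons_self with hs | hs
      · exact (hc s hs _).1
      · simpa using (hc s⁻¹ hs w.prod).2
    have := ih fun x hx => hw x (List.mem_cons_of_mem s hx)
    rw [List.prod_cons, List.length_cons]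
    linarith

theorem wordLength_map_le {H F : Type*} [Group H] [FunLike F G H] [MonoidHomClass F G H]
    {U : Set H} (hS : Subgroup.closure S = ⊤) (hU : Subgroup.closure U = ⊤) (f : F) {K : ℕ}
    (hK : ∀ s ∈ S, wordLength U (f s) ≤ K) (g : G) :
    wordLength U (f g) ≤ K * wordLength S g := by
  have hstep (s : G) (hs : s ∈ S) (g : G) :
      wordLength U (f (s * g)) ≤ K + wordLength U (f g) ∧
        wordLength U (f (s⁻¹ * g)) ≤ K + wordLength U (f g) := by
    simp only [map_mul, map_inv]
    exact ⟨(wordLength_mul_le hU _ _).trans (Nat.add_le_add_right (hK s hs) _),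
      (wordLength_mul_le hU _ _).trans
        (Nat.add_le_add_right ((wordLength_inv_le hU _).trans (hK s hs)) _)⟩
  simpa [wordLength_one] using le_mul_wordLength_add (c := fun g => wordLength U (f g)) hS hstep g

theorem exists_wordLength_map_le {H F : Type*} [Group H] [FunLike F G H] [MonoidHomClass F G H]
    {S : Finset G} {U : Set H} (hS : Subgroup.closure (S : Set G) = ⊤)
    (hU : Subgroup.closure U = ⊤) (f : F) :
    ∃ K, ∀ g, wordLength U (f g) ≤ K * wordLength S g :=
  ⟨_, wordLength_map_le hS hU f fun _ hs => Finset.le_sup (f := fun s => wordLength U (f s)) hs⟩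

end WordLength

theorem EventuallyTrivial.of_iterate_eq_one {G : Type*} [Group G] {f : G → G} (k : ℕ)
    (h : ∀ g, f^[k] g = 1) : EventuallyTrivial f :=
  ⟨k + 1, k.succ_pos, fun g => by rw [Function.iterate_succ_apply]; exact h (f g)⟩

theorem EventuallyTrivial.of_semiconj_subtype {G : Type*} [Group G] {N : Subgroup G}
    {f : G → G} {f' : N → N} (hf' : Function.Semiconj (↑) f' f) (hf : EventuallyTrivial f) :
    EventuallyTrivial f' := by
  obtain ⟨k, hk, h⟩ := hf
  exact ⟨k, hk, fun g => Subtype.ext <| by rw [(hf'.iterate_right k) g, h, Subgroup.coe_one]⟩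

section Lk

variable {G : Type*} [Group G] {S : Finset G}

theorem wordLength_iterate_le (hS : Subgroup.closure (S : Set G) = ⊤) (φ : G →* G)
    (k : ℕ) (g : G) :
    wordLength S (φ^[k] g) ≤ Lk S φ k * wordLength S g :=
  wordLength_map_le hS hS ((show Monoid.End G from φ) ^ k)
    (fun _ hs => Finset.le_sup (f := fun s => wordLength (S : Set G) (φ^[k] s)) hs) g

theorem Lk_add_le (hS : Subgroup.closure (S : Set G) = ⊤) (φ : G →* G) (a b : ℕ) :
    Lk S φ (a + b) ≤ Lk S φ a * Lk S φ b :=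
  Finset.sup_le fun s hs => by
    rw [Function.iterate_add_apply]
    exact (wordLength_iterate_le hS φ a _).trans <| Nat.mul_le_mul_left _ <|
      Finset.le_sup (f := fun s => wordLength (S : Set G) (φ^[b] s)) hs

theorem one_le_Lk (hS : Subgroup.closure (S : Set G) = ⊤) {φ : G →* G}
    (hφ : ¬ EventuallyTrivial φ) (k : ℕ) : 1 ≤ Lk S φ k := by
  refine Nat.one_le_iff_ne_zero.2 fun h0 => hφ (.of_iterate_eq_one k fun g => ?_)
  refine eq_one_of_wordLength_eq_zero hS (Nat.le_zero.1 ?_)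
  simpa [h0] using wordLength_iterate_le hS φ k g

end Lk

section GrowthRate

open Finset

noncomputable def growthRate (M : ℕ → ℕ) : ℝ :=
  ⨅ k : ℕ+, (M k : ℝ) ^ ((k : ℕ) : ℝ)⁻¹

theorem GR_eq_growthRate {G : Type*} [Group G] (S : Finset G) (f : G → G) :
    GR S f = growthRate (Lk S f) := rfl

variable {M L : ℕ → ℕ}

theorem growthRate_le_rpow (L : ℕ → ℕ) {k : ℕ} (hk : 0 < k) :
    growthRate L ≤ (L k : ℝ) ^ (k : ℝ)⁻¹ :=
  ciInf_le ⟨0, by rintro _ ⟨j, rfl⟩; positivity⟩ (⟨k, hk⟩ : ℕ+)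

theorem one_le_growthRate (hpos : ∀ k, 1 ≤ M k) : 1 ≤ growthRate M :=
  le_ciInf fun k => Real.one_le_rpow (by exact_mod_cast hpos k) (by positivity)

theorem le_pow_mul_of_submultiplicative (hsub : ∀ a b, M (a + b) ≤ M a * M b) (i q r : ℕ) :
    M (i * q + r) ≤ M i ^ q * M r := by
  induction q with
  | zero => simp
  | succ q ih =>
    calc M (i * (q + 1) + r) = M (i + (i * q + r)) := by ring_nf
      _ ≤ M i * M (i * q + r) := hsub _ _
      _ ≤ M i * (M i ^ q * M r) := Nat.mul_le_mul_left _ ih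
      _ = M i ^ (q + 1) * M r := by ring

theorem exists_le_mul_pow_of_growthRate_lt (hsub : ∀ a b, M (a + b) ≤ M a * M b) {β : ℝ}
    (hβ : growthRate M < β) : ∃ C : ℝ, ∀ k, (M k : ℝ) ≤ C * β ^ k := by
  obtain ⟨i, hi⟩ := exists_lt_of_ciInf_lt hβ
  have hβ0 : 0 < β := lt_of_le_of_lt (by positivity) hi
  have hMi : (M i : ℝ) ≤ β ^ (i : ℕ) := by
    rw [Real.rpow_inv_lt_iff_of_pos (by positivity) hβ0.le (by positivity),
      Real.rpow_natCast] at hi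
    exact hi.le
  refine ⟨∑ r ∈ range i, (M r : ℝ) / β ^ r, fun k => ?_⟩
  obtain ⟨q, r, hr, rfl⟩ : ∃ q r, r < (i : ℕ) ∧ (i : ℕ) * q + r = k :=
    ⟨k / i, k % i, Nat.mod_lt _ i.pos, Nat.div_add_mod k i⟩
  have hMr : (M r : ℝ) / β ^ r ≤ ∑ r ∈ range i, (M r : ℝ) / β ^ r :=
    single_le_sum (f := fun r => (M r : ℝ) / β ^ r) (fun _ _ => by positivity) (mem_range.2 hr)
  calc (M (i * q + r) : ℝ) ≤ (M i : ℝ) ^ q * M r := by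
        exact_mod_cast le_pow_mul_of_submultiplicative hsub i q r
    _ ≤ (β ^ (i : ℕ)) ^ q * M r := by gcongr
    _ = (M r : ℝ) / β ^ r * β ^ ((i : ℕ) * q + r) := by
        field_simp
        ring
    _ ≤ _ := by gcongr

theorem growthRate_le_of_le_mul_pow {C β : ℝ} (hC : 0 < C) (hβ : 0 ≤ β)
    (h : ∀ k, (L k : ℝ) ≤ C * β ^ k) : growthRate L ≤ β := by
  have hbound (n : ℕ) : growthRate L ≤ C ^ ((n + 1 : ℕ) : ℝ)⁻¹ * β := by
    calc growthRate L ≤ (L (n + 1) : ℝ) ^ ((n + 1 : ℕ) : ℝ)⁻¹ :=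
          growthRate_le_rpow L n.succ_pos
      _ ≤ (C * β ^ (n + 1)) ^ ((n + 1 : ℕ) : ℝ)⁻¹ := by gcongr; exact h _
      _ = C ^ ((n + 1 : ℕ) : ℝ)⁻¹ * β := by
        rw [Real.mul_rpow hC.le (by positivity), Real.pow_rpow_inv_natCast hβ n.succ_ne_zero]
  have hlim : Tendsto (fun n : ℕ => C ^ ((n + 1 : ℕ) : ℝ)⁻¹ * β) atTop (𝓝 β) := by
    have hinv : Tendsto (fun n : ℕ => ((n + 1 : ℕ) : ℝ)⁻¹) atTop (𝓝 0) :=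
      tendsto_inv_atTop_nhds_zero_nat.comp (tendsto_add_atTop_nat 1)
    simpa using ((Real.continuousAt_const_rpow hC.ne').tendsto.comp hinv).mul_const β
  exact ge_of_tendsto' hlim hbound

theorem geom_sum_range_succ_le {β : ℝ} (hβ : 1 < β) (k : ℕ) :
    ∑ j ∈ range (k + 1), β ^ j ≤ β / (β - 1) * β ^ k := by
  rw [geom_sum_eq hβ.ne', div_mul_eq_mul_div, ← pow_succ']
  gcongr
  · linarith

theorem growthRate_le_of_le_sum (hsub : ∀ a b, M (a + b) ≤ M a * M b) (hpos : ∀ k, 1 ≤ M k)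
    {C : ℕ} (h : ∀ k, L k ≤ C * ∑ j ∈ range (k + 1), M j + C) :
    growthRate L ≤ growthRate M := by
  refine le_of_forall_gt_imp_ge_of_dense fun β hβ => ?_
  have hβ1 : 1 < β := (one_le_growthRate hpos).trans_lt hβ
  obtain ⟨C₁, hC₁⟩ := exists_le_mul_pow_of_growthRate_lt hsub hβ
  have hC₁0 : 0 ≤ C₁ :=
    zero_le_one.trans (by simpa using (Nat.one_le_cast.2 (hpos 0)).trans (hC₁ 0))
  refine growthRate_le_of_le_mul_pow (C := C * C₁ * (β / (β - 1)) + C + 1)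
    (by positivity) (by positivity) fun k => ?_
  have hsum : (∑ j ∈ range (k + 1), (M j : ℝ)) ≤ C₁ * (β / (β - 1) * β ^ k) := by
    calc (∑ j ∈ range (k + 1), (M j : ℝ)) ≤ ∑ j ∈ range (k + 1), C₁ * β ^ j :=
          sum_le_sum fun j _ => hC₁ j
      _ ≤ C₁ * (β / (β - 1) * β ^ k) := by
          rw [← mul_sum]
          exact mul_le_mul_of_nonneg_left (geom_sum_range_succ_le hβ1 k) hC₁0
  have hβk : 1 ≤ β ^ k := one_le_pow₀ hβ1.le
  calc (L k : ℝ) ≤ C * ∑ j ∈ range (k + 1), (M j : ℝ) + C := by exact_mod_cast h k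
    _ ≤ C * (C₁ * (β / (β - 1) * β ^ k)) + C * β ^ k := by
        gcongr
        exact le_mul_of_one_le_right (by positivity) hβk
    _ ≤ (C * C₁ * (β / (β - 1)) + C + 1) * β ^ k := by nlinarith

end GrowthRate

section FiniteIndex

variable {G : Type*} [Group G] {N : Subgroup G}

noncomputable def cosetRemainder (N : Subgroup G) (g : G) : N :=
  ⟨(g : G ⧸ N).out⁻¹ * g, QuotientGroup.eq.mp (QuotientGroup.out_eq' _)⟩

theorem out_mul_cosetRemainder (g : G) : (g : G ⧸ N).out * cosetRemainder N g = g :=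
  mul_inv_cancel_left _ _

theorem cosetRemainder_mul (s g : G) :
    cosetRemainder N (s * g) = cosetRemainder N (s * (g : G ⧸ N).out) * cosetRemainder N g := by
  have h : ((s * (g : G ⧸ N).out : G) : G ⧸ N) = (s * g : G) := by
    rw [QuotientGroup.eq, mul_inv_rev, mul_assoc, inv_mul_cancel_left]
    exact (cosetRemainder N g).2
  ext
  simp only [cosetRemainder, Subgroup.coe_mul, h]
  group

theorem cosetRemainder_coe (h : N) : cosetRemainder N h = cosetRemainder N 1 * h := by
  have hh : ((h : G) : G ⧸ N) = ((1 : G) : G ⧸ N) := by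
    rw [QuotientGroup.eq]
    simp
  ext
  simp [cosetRemainder, hh]

theorem exists_wordLength_le_of_finiteIndex [N.FiniteIndex] {S : Finset G} {S' : Set N}
    (hS : Subgroup.closure (S : Set G) = ⊤) (hS' : Subgroup.closure S' = ⊤) :
    ∃ K C : ℕ, ∀ h : N, wordLength S' h ≤ K * wordLength S (h : G) + C := by
  set c : G → ℕ := fun g => wordLength S' (cosetRemainder N g)
  obtain ⟨K, hK⟩ := Finite.exists_le fun p : S × (G ⧸ N) =>
    max (c (p.1 * p.2.out)) (c ((p.1 : G)⁻¹ * p.2.out))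
  have hstep (s : G) (hs : s ∈ S) (g : G) : c (s * g) ≤ K + c g ∧ c (s⁻¹ * g) ≤ K + c g := by
    obtain ⟨hKs, hKs'⟩ := max_le_iff.1 (hK (⟨s, hs⟩, g))
    simp only [c, cosetRemainder_mul _ g]
    exact ⟨(wordLength_mul_le hS' _ _).trans (Nat.add_le_add_right hKs _),
      (wordLength_mul_le hS' _ _).trans (Nat.add_le_add_right hKs' _)⟩
  refine ⟨K, wordLength S' (cosetRemainder N 1)⁻¹ + c 1, fun h => ?_⟩
  have hc := le_mul_wordLength_add hS hstep h
  calc wordLength S' h = wordLength S' ((cosetRemainder N 1)⁻¹ * cosetRemainder N h) := by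
        rw [cosetRemainder_coe, inv_mul_cancel_left]
    _ ≤ wordLength S' (cosetRemainder N 1)⁻¹ + c h := wordLength_mul_le hS' _ _
    _ ≤ K * wordLength S (h : G) + (wordLength S' (cosetRemainder N 1)⁻¹ + c 1) := by omega

variable {φ : G →* G} {φ' : N →* N} {S : Finset G} {S' : Finset N}

theorem Lk_restrict_le [N.FiniteIndex] (hS : Subgroup.closure (S : Set G) = ⊤)
    (hS' : Subgroup.closure (S' : Set N) = ⊤) (hφ' : Function.Semiconj (↑) φ' φ) :
    ∃ C, ∀ k, Lk S' φ' k ≤ C * Lk S φ k + C := by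
  obtain ⟨K, C, hKC⟩ := exists_wordLength_le_of_finiteIndex hS hS'
  obtain ⟨A, hA⟩ := exists_wordLength_map_le hS' hS N.subtype
  refine ⟨K * A + C, fun k => Finset.sup_le fun s hs => ?_⟩
  have hs1 : wordLength (S : Set G) (s : G) ≤ A := by
    simpa using (hA s).trans (Nat.mul_le_mul_left A (wordLength_le_one hs))
  calc wordLength (S' : Set N) (φ'^[k] s)
      ≤ K * wordLength (S : Set G) (φ^[k] s) + C := by
        rw [← hφ'.iterate_right k s]
        exact hKC _
    _ ≤ K * (Lk S φ k * A) + C := by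
        gcongr
        exact (wordLength_iterate_le hS φ k s).trans (Nat.mul_le_mul_left _ hs1)
    _ ≤ (K * A + C) * Lk S φ k + (K * A + C) := by nlinarith

theorem wordLength_iterate_coe_le (hS' : Subgroup.closure (S' : Set N) = ⊤)
    (hφ' : Function.Semiconj (↑) φ' φ) {A : ℕ}
    (hA : ∀ x : N, wordLength (S : Set G) x ≤ A * wordLength S' x) (k : ℕ) (x : N) :
    wordLength (S : Set G) (φ^[k] x) ≤ A * Lk S' φ' k * wordLength (S' : Set N) x := by
  rw [← hφ'.iterate_right k x, mul_assoc]
  exact (hA _).trans (Nat.mul_le_mul_left A (wordLength_iterate_le hS' φ' k x))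

theorem wordLength_iterate_out_le (hS : Subgroup.closure (S : Set G) = ⊤)
    (hS' : Subgroup.closure (S' : Set N) = ⊤) (hφ' : Function.Semiconj (↑) φ' φ) {A D E : ℕ}
    (hA : ∀ x : N, wordLength (S : Set G) x ≤ A * wordLength S' x)
    (hD : ∀ q : G ⧸ N, wordLength (S' : Set N) (cosetRemainder N (φ q.out)) ≤ D)
    (hE : ∀ q : G ⧸ N, wordLength (S : Set G) q.out ≤ E) (k : ℕ) (q : G ⧸ N) :
    wordLength (S : Set G) (φ^[k] q.out) ≤ A * D * ∑ j ∈ Finset.range k, Lk S' φ' j + E := by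
  induction k generalizing q with
  | zero => simpa using hE q
  | succ k ih =>
    have hrem := wordLength_iterate_coe_le hS' hφ' hA k (cosetRemainder N (φ q.out))
    rw [Function.iterate_succ_apply, ← out_mul_cosetRemainder (φ q.out),
      iterate_map_mul, Finset.sum_range_succ]
    refine (wordLength_mul_le hS _ _).trans ?_
    have hih := ih (φ q.out : G ⧸ N)
    have hremD := Nat.mul_le_mul_left (A * Lk S' φ' k) (hD q)
    linarith

theorem Lk_le_sum_Lk_restrict [N.FiniteIndex] (hS : Subgroup.closure (S : Set G) = ⊤)
    (hS' : Subgroup.closure (S' : Set N) = ⊤) (hφ' : Function.Semiconj (↑) φ' φ) :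
    ∃ C, ∀ k, Lk S φ k ≤ C * ∑ j ∈ Finset.range (k + 1), Lk S' φ' j + C := by
  obtain ⟨A, hA⟩ := exists_wordLength_map_le hS' hS N.subtype
  obtain ⟨D, hD⟩ := Finite.exists_le fun q : G ⧸ N =>
    wordLength (S' : Set N) (cosetRemainder N (φ q.out))
  obtain ⟨D', hD'⟩ := Finite.exists_le fun s : S => wordLength (S' : Set N) (cosetRemainder N s)
  obtain ⟨E, hE⟩ := Finite.exists_le fun q : G ⧸ N => wordLength (S : Set G) q.out
  have hout := wordLength_iterate_out_le hS hS' hφ' hA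
    (fun q => (hD q).trans (le_max_left D D')) hE
  have hrem := wordLength_iterate_coe_le hS' hφ' hA
  refine ⟨A * max D D' + E, fun k => Finset.sup_le fun s hs => ?_⟩
  have h₁ := hout k s
  have h₂ := Nat.mul_le_mul_left (A * Lk S' φ' k) ((hD' ⟨s, hs⟩).trans (le_max_right D D'))
  have h₃ := hrem k (cosetRemainder N s)
  calc wordLength (S : Set G) (φ^[k] s)
      ≤ wordLength (S : Set G) (φ^[k] (s : G ⧸ N).out) +
          wordLength (S : Set G) (φ^[k] (cosetRemainder N s)) := by
        conv_lhs => rw [← out_mul_cosetRemainder (N := N) s, iterate_map_mul]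
        exact wordLength_mul_le hS _ _
    _ ≤ A * max D D' * ∑ j ∈ Finset.range (k + 1), Lk S' φ' j + E := by
        rw [Finset.sum_range_succ]
        nlinarith
    _ ≤ _ := by gcongr <;> omega

end FiniteIndex

/-- If `π'` is a `φ`-invariant finite-index subgroup of the finitely
generated group `π` and the restriction `φ' = φ|_{π'}` is not eventually trivial,
then `GR(φ) = GR(φ')`. -/
theorem GR_eq_restriction_of_finiteIndex {π : Type*} [Group π] (S : Finset π)
    (hS : Subgroup.closure (S : Set π) = ⊤) (φ : π →* π)
    (N : Subgroup π) [N.FiniteIndex] (hinv : ∀ g ∈ N, φ g ∈ N)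
    (S' : Finset N) (hS' : Subgroup.closure (S' : Set N) = ⊤)
    (hnt : ¬ EventuallyTrivial (fun x : N => (⟨φ x, hinv x x.2⟩ : N))) :
    GR S ⇑φ = GR S' (fun x : N => (⟨φ x, hinv x x.2⟩ : N)) := by
  set φ' : N →* N := (φ.comp N.subtype).codRestrict N fun x => hinv x x.2
  show GR S φ = GR S' φ'
  have hφ' : Function.Semiconj (↑) φ' φ := fun _ => rfl
  have hnt' : ¬ EventuallyTrivial φ := fun h => hnt (h.of_semiconj_subtype hφ')
  obtain ⟨C, hC⟩ := Lk_restrict_le hS hS' hφ'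
  obtain ⟨C', hC'⟩ := Lk_le_sum_Lk_restrict hS hS' hφ'
  have hC_sum (k : ℕ) : Lk S' φ' k ≤ C * ∑ j ∈ Finset.range (k + 1), Lk S φ j + C :=
    (hC k).trans <| by
      gcongr
      exact Finset.single_le_sum (f := Lk S φ) (fun _ _ => Nat.zero_le _)
        (Finset.self_mem_range_succ k)
  rw [GR_eq_growthRate, GR_eq_growthRate]
  exact le_antisymm (growthRate_le_of_le_sum (Lk_add_le hS' φ') (one_le_Lk hS' hnt) hC')
    (growthRate_le_of_le_sum (Lk_add_le hS φ) (one_le_Lk hS hnt') hC_sum)
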